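/- arXiv:2211.03708 — 3 statements merged into one kernel-verified Lean document; each statement's English description precedes it below -/
import Mathlib

section
/- Let Δ ⊆ k̄² be any subset, and let Δ̂ denote the zero locus in k̄² of the ideal I_k(Δ) ⊆ k[x,y] of all polynomials with coefficients in k vanishing at every point of Δ. Then every irreducible component of Δ̂ (for the Zariski topology on k̄²) is the image, under the coordinatewise action of some g ∈ Gal(k̄/k), of an irreducible component of the Zariski closure of Δ in k̄². -/
open MvPolynomial

noncomputable section

/-- Points of the affine plane over the algebraic closure of `k`. -/
abbrev Pt (k : Type*) [Field k] : Type _ := Fin 2 → AlgebraicClosure k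

/-- Plane automorphisms over `k`, modeled as `k`-algebra automorphisms of `k[x,y]`. -/
abbrev PlaneAut (k : Type*) [Field k] : Type _ :=
  MvPolynomial (Fin 2) k ≃ₐ[k] MvPolynomial (Fin 2) k

/-- The embedding of `k` in its algebraic closure. -/
abbrev emb (k : Type*) [Field k] : k →+* AlgebraicClosure k :=
  algebraMap k (AlgebraicClosure k)

variable {k : Type*} [Field k]

/-- The action of a plane automorphism on the points of the plane over `k̄`:
the point map of `φ` is `q ↦ (f(q), g(q))` where `f = φ.symm X₀`, `g = φ.symm X₁`
(so that `actp` is a left action of the automorphism group on points). -/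
def actp (φ : PlaneAut k) (q : Pt k) : Pt k :=
  fun i => aeval q (φ.symm (X i))

/-- The Zariski closure of a set of points of `k̄²`: the zero locus of the ideal of all
polynomials with coefficients in `k̄` vanishing on it. -/
def zclos (Δ : Set (Pt k)) : Set (Pt k) :=
  zeroLocus (AlgebraicClosure k) (vanishingIdeal (k := AlgebraicClosure k) Δ)

/-- `Δ̂` : the zero locus in `k̄²` of the ideal `I_k(Δ)` of all polynomials with
coefficients in `k` vanishing on `Δ`. -/
def hatSet (Δ : Set (Pt k)) : Set (Pt k) :=
  {q | ∀ P : MvPolynomial (Fin 2) k, (∀ x ∈ Δ, aeval x P = 0) → aeval q P = 0}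

/-- Coordinatewise action of the Galois group `Gal(k̄/k)` on points of `k̄²`. -/
def galAct (g : AlgebraicClosure k ≃ₐ[k] AlgebraicClosure k) (q : Pt k) : Pt k :=
  fun i => g (q i)

/-- A subset of `k̄²` is Zariski closed iff it is the zero locus of an ideal of `k̄[x,y]`. -/
def IsZClosed (S : Set (Pt k)) : Prop :=
  ∃ I : Ideal (MvPolynomial (Fin 2) (AlgebraicClosure k)), S = zeroLocus (AlgebraicClosure k) I

/-- Irreducibility with respect to the Zariski topology on `k̄²`. -/
def IsZIrreducible (S : Set (Pt k)) : Prop :=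
  S.Nonempty ∧ ∀ Z₁ Z₂ : Set (Pt k), IsZClosed Z₁ → IsZClosed Z₂ → S ⊆ Z₁ ∪ Z₂ →
    (S ⊆ Z₁ ∨ S ⊆ Z₂)

/-- `C` is an irreducible component of `S` (for the Zariski topology on `k̄²`):
a maximal irreducible subset of `S`. -/
def IsIrredComponentOf (C S : Set (Pt k)) : Prop :=
  IsZIrreducible C ∧ C ⊆ S ∧ ∀ C' : Set (Pt k), IsZIrreducible C' → C' ⊆ S → C ⊆ C' → C = C'

/-- The stabilizer `Aut(𝔸², Δ)` of a set of points of `k̄²`, as a set of plane automorphisms. -/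
def stabSet (Δ : Set (Pt k)) : Set (PlaneAut k) :=
  {φ | actp φ '' Δ = Δ}

/-- The orbit `O_H(p)` of a point under a subgroup of plane automorphisms. -/
def orbSub (H : Subgroup (PlaneAut k)) (p : Pt k) : Set (Pt k) :=
  {q | ∃ h ∈ H, actp h p = q}

/-- The orbit `O_φ(p) = {φⁿ(p) : n ∈ ℤ}` of a point under a single plane automorphism. -/
def orbAut (φ : PlaneAut k) (p : Pt k) : Set (Pt k) :=
  {q | ∃ n : ℤ, actp (φ ^ n) p = q}

/-- The degree of a plane automorphism: the maximum of the total degrees of the two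
polynomials giving its point map. -/
def autDegree (φ : PlaneAut k) : ℕ :=
  max (φ.symm (X 0)).totalDegree (φ.symm (X 1)).totalDegree

/-- The torus `T = {(x,y) ↦ (t·x, t⁻¹·y) : t ∈ k*}`, as a set of plane automorphisms. -/
def torusT (k : Type*) [Field k] : Set (PlaneAut k) :=
  {φ | ∃ t : k, t ≠ 0 ∧ ∀ q : Pt k, actp φ q = ![emb k t * q 0, (emb k t)⁻¹ * q 1]}

end

/-!
Let `Y` be the union of the Galois translates `g • cl(Δ)`. The closure `cl(Δ)` is cut out by
finitely many polynomials, each of which has a finite Galois orbit, so there are only finitely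
many translates and `Y` is Zariski closed. Every translate lies in `Δ̂`. Conversely, if `P`
vanishes on `Y`, then all its conjugates `Pᵍ` vanish on `Δ`, so the coefficients of
`∏ (T - Pᵍ)` below the top one vanish on `Δ`; they are Galois invariant, hence defined over `k`
because `k` is perfect, so they also vanish on `Δ̂`. At a point of `Δ̂` the product therefore
becomes `Tⁿ`, whose only root is `0`, so `P` vanishes there. Hence `Δ̂ = Y`. An irreducible
component of `Δ̂` then lies in one translate `g • cl(Δ)`, and by maximality it is the translate
of an irreducible component of `cl(Δ)`.
-/

section GaloisDescent

open Polynomial in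
theorem Multiset.eq_zero_of_coeff_prod_X_sub_C_eq_zero {R : Type*} [CommRing R] [IsDomain R]
    {s : Multiset R}
    (h : ∀ i < card s, ((s.map fun a => Polynomial.X - Polynomial.C a).prod).coeff i = 0) :
    ∀ a ∈ s, a = 0 := by
  have hmonic := monic_multiset_prod_of_monic s _ fun a _ => monic_X_sub_C a
  have hdeg := natDegree_multiset_prod_X_sub_C_eq_card s
  have hX : (s.map fun a => Polynomial.X - Polynomial.C a).prod = Polynomial.X ^ card s := by
    ext i
    rcases lt_trichotomy i (card s) with hi | rfl | hi
    · rw [h i hi, Polynomial.coeff_X_pow, if_neg hi.ne]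
    · rw [← hdeg, hmonic.coeff_natDegree, hdeg, Polynomial.coeff_X_pow_self]
    · rw [coeff_eq_zero_of_natDegree_lt (hdeg ▸ hi), Polynomial.coeff_X_pow, if_neg hi.ne']
  intro a ha
  have hroots := roots_multiset_prod_X_sub_C s
  rw [hX, roots_X_pow, Multiset.nsmul_singleton] at hroots
  exact Multiset.eq_of_mem_replicate (hroots ▸ ha)

variable {k K σ : Type*} [Field k] [Field K] [Algebra k K]

theorem finite_range_algEquiv_apply [Algebra.IsAlgebraic k K] (x : K) :
    (Set.range fun g : K ≃ₐ[k] K => g x).Finite := by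
  refine ((minpoly k x).rootSet_finite K).subset ?_
  rintro _ ⟨g, rfl⟩
  rw [Polynomial.mem_rootSet]
  exact ⟨minpoly.ne_zero (Algebra.IsIntegral.isIntegral x),
    minpoly.algEquiv_eq g x ▸ minpoly.aeval k (g x)⟩

namespace MvPolynomial

theorem finite_range_map_algEquiv [Algebra.IsAlgebraic k K] (P : MvPolynomial σ K) :
    (Set.range fun g : K ≃ₐ[k] K => map (g : K →+* K) P).Finite := by
  let build : (P.support → K) → MvPolynomial σ K := fun c => ∑ m : P.support, monomial m (c m)
  refine ((Set.Finite.pi fun m : P.support =>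
    finite_range_algEquiv_apply (k := k) (coeff m P)).image build).subset ?_
  rintro _ ⟨g, rfl⟩
  refine ⟨fun m => g (coeff m P), fun m _ => ⟨g, rfl⟩, ?_⟩
  calc build (fun m => g (coeff m P))
      = ∑ m ∈ P.support, monomial m (g (coeff m P)) :=
        Finset.sum_coe_sort P.support fun m => monomial m (g (coeff m P))
    _ = map (g : K →+* K) P := by
      conv_rhs => rw [← support_sum_monomial_coeff P]
      simp only [map_sum, map_monomial]
      rfl

theorem mem_range_map_of_forall_map_eq [IsGalois k K] {c : MvPolynomial σ K}
    (h : ∀ g : K ≃ₐ[k] K, map (g : K →+* K) c = c) :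
    c ∈ Set.range (map (algebraMap k K)) := by
  rw [mem_range_map_iff_coeffs_subset]
  intro a ha
  obtain ⟨m, -, rfl⟩ := mem_coeffs_iff.mp ha
  refine (InfiniteGalois.mem_range_algebraMap_iff_fixed _).mpr fun g => ?_
  exact (coeff_map _ _ _).symm.trans (congr_arg (coeff m) (h g))

variable (k) in
noncomputable def galoisOrbitPoly [Algebra.IsAlgebraic k K] (P : MvPolynomial σ K) :
    Polynomial (MvPolynomial σ K) :=
  ∏ Q ∈ (finite_range_map_algEquiv (k := k) P).toFinset, (Polynomial.X - Polynomial.C Q)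

theorem map_map_galoisOrbitPoly [Algebra.IsAlgebraic k K] (P : MvPolynomial σ K)
    (g : K ≃ₐ[k] K) : (galoisOrbitPoly k P).map (map (g : K →+* K)) = galoisOrbitPoly k P := by
  classical
  set s := (finite_range_map_algEquiv (k := k) P).toFinset
  have hinj : Function.Injective (map (σ := σ) (g : K →+* K)) := map_injective _ g.injective
  have himage : s.image (map (g : K →+* K)) = s := by
    refine Finset.eq_of_subset_of_card_le (fun Q hQ => ?_)
      (Finset.card_image_of_injective _ hinj).ge
    obtain ⟨_, hP', rfl⟩ := Finset.mem_image.mp hQ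
    obtain ⟨h, rfl⟩ := Set.mem_range.mp ((Set.Finite.mem_toFinset _).mp hP')
    exact (Set.Finite.mem_toFinset _).mpr ⟨h.trans g, by rw [map_map]; rfl⟩
  calc (galoisOrbitPoly k P).map (map (g : K →+* K))
      = ∏ Q ∈ s.image (map (g : K →+* K)), (Polynomial.X - Polynomial.C Q) := by
        simp [galoisOrbitPoly, s, Polynomial.map_prod, Finset.prod_image hinj.injOn]
    _ = galoisOrbitPoly k P := by rw [himage]; rfl

theorem eval_eq_zero_of_forall_map_eval_eq_zero [IsGalois k K] {Δ : Set (σ → K)} {q : σ → K}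
    (hq : ∀ b : MvPolynomial σ k, (∀ x ∈ Δ, aeval x b = 0) → aeval q b = 0)
    {P : MvPolynomial σ K} (hP : ∀ g : K ≃ₐ[k] K, ∀ x ∈ Δ, eval x (map (g : K →+* K) P) = 0) :
    eval q P = 0 := by
  set s := (finite_range_map_algEquiv (k := k) P).toFinset
  have hmem : ∀ Q, Q ∈ s ↔ ∃ g : K ≃ₐ[k] K, map (g : K →+* K) P = Q := by simp [s]
  set F := galoisOrbitPoly k P with hF
  have hF_coeff (i : ℕ) : F.coeff i ∈ Set.range (map (algebraMap k K)) :=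
    mem_range_map_of_forall_map_eq fun g => by
      rw [← Polynomial.coeff_map, map_map_galoisOrbitPoly]
  have hF_low (i : ℕ) (hi : i < s.card) : eval q (F.coeff i) = 0 := by
    obtain ⟨b, hb⟩ := hF_coeff i
    have hΔ : ∀ x ∈ Δ, aeval x b = 0 := by
      intro x hx
      have hX : F.map (eval x) = Polynomial.X ^ s.card := by
        rw [hF, galoisOrbitPoly, Polynomial.map_prod, ← Finset.prod_const]
        refine Finset.prod_congr rfl fun Q hQ => ?_
        obtain ⟨g, rfl⟩ := (hmem Q).mp hQ
        simp [hP g x hx]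
      rw [aeval_def, ← eval_map, hb, ← Polynomial.coeff_map, hX, Polynomial.coeff_X_pow,
        if_neg hi.ne]
    rw [← hb, eval_map, ← aeval_def]
    exact hq b hΔ
  have hF_eval : F.map (eval q) =
      ((s.val.map (eval q)).map fun a => Polynomial.X - Polynomial.C a).prod := by
    simp only [F, galoisOrbitPoly, Polynomial.map_prod, Polynomial.map_sub, Polynomial.map_X,
      Polynomial.map_C, Multiset.map_map, Function.comp_def]
    rfl
  refine Multiset.eq_zero_of_coeff_prod_X_sub_C_eq_zero (s := s.val.map (eval q)) ?_ _
    (Multiset.mem_map_of_mem _ ((hmem P).mpr ⟨AlgEquiv.refl, map_id P⟩))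
  intro i hi
  rw [← hF_eval, Polynomial.coeff_map]
  exact hF_low i (by simpa using hi)

end MvPolynomial

end GaloisDescent

section GaloisAction

variable {k : Type*} [Field k]

local notation "K̄" => AlgebraicClosure k

theorem galAct_symm_galAct (g : K̄ ≃ₐ[k] K̄) (q : Pt k) : galAct g.symm (galAct g q) = q :=
  funext fun _ => g.symm_apply_apply _

theorem galAct_galAct_symm (g : K̄ ≃ₐ[k] K̄) (q : Pt k) : galAct g (galAct g.symm q) = q :=
  funext fun _ => g.apply_symm_apply _

theorem galAct_symm_image_galAct_image (g : K̄ ≃ₐ[k] K̄) (S : Set (Pt k)) :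
    galAct g.symm '' (galAct g '' S) = S := by
  simp [Set.image_image, galAct_symm_galAct]

theorem galAct_image_galAct_symm_image (g : K̄ ≃ₐ[k] K̄) (S : Set (Pt k)) :
    galAct g '' (galAct g.symm '' S) = S := by
  simp [Set.image_image, galAct_galAct_symm]

theorem image_galAct (g : K̄ ≃ₐ[k] K̄) (S : Set (Pt k)) :
    galAct g '' S = galAct g.symm ⁻¹' S :=
  congrFun (Set.image_eq_preimage_of_inverse (galAct_symm_galAct g) (galAct_galAct_symm g)) S

theorem preimage_galAct (g : K̄ ≃ₐ[k] K̄) (S : Set (Pt k)) :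
    galAct g ⁻¹' S = galAct g.symm '' S := by
  rw [image_galAct, AlgEquiv.symm_symm]

theorem eval_galAct_map (g : K̄ ≃ₐ[k] K̄) (q : Pt k) (P : MvPolynomial (Fin 2) K̄) :
    eval (galAct g q) (map (g : K̄ →+* K̄) P) = g (eval q P) := by
  induction P using MvPolynomial.induction_on <;> simp_all [galAct]

theorem galAct_image_zeroLocus_span (g : K̄ ≃ₐ[k] K̄) (S : Set (MvPolynomial (Fin 2) K̄)) :
    galAct g '' zeroLocus K̄ (Ideal.span S) =
      zeroLocus K̄ (Ideal.span (map (g : K̄ →+* K̄) '' S)) := by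
  ext q
  have hq (P : MvPolynomial (Fin 2) K̄) :
      aeval q (map (g : K̄ →+* K̄) P) = g (aeval (galAct g.symm q) P) := by
    have h := eval_galAct_map g (galAct g.symm q) P
    rwa [galAct_galAct_symm] at h
  simp only [image_galAct, Set.mem_preimage, zeroLocus_span, Set.mem_ofPred_eq,
    Set.forall_mem_image, hq, EmbeddingLike.map_eq_zero_iff]

end GaloisAction

section ZariskiTopology

variable {k : Type*} [Field k]

local notation "K̄" => AlgebraicClosure k

theorem isZClosed_empty : IsZClosed (∅ : Set (Pt k)) :=
  ⟨⊤, (zeroLocus_top (k := K̄)).symm⟩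

theorem IsZClosed.union {A B : Set (Pt k)} (hA : IsZClosed A) (hB : IsZClosed B) :
    IsZClosed (A ∪ B) := by
  obtain ⟨I, rfl⟩ := hA
  obtain ⟨J, rfl⟩ := hB
  refine ⟨I * J, Set.Subset.antisymm ?_ fun q hq => ?_⟩
  · exact Set.union_subset (zeroLocus_anti_mono Ideal.mul_le_left)
      (zeroLocus_anti_mono Ideal.mul_le_right)
  · by_contra hqIJ
    obtain ⟨⟨f, hfI, hf⟩, ⟨h, hhJ, hh⟩⟩ : (∃ f ∈ I, eval q f ≠ 0) ∧ ∃ h ∈ J, eval q h ≠ 0 := by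
      simpa [mem_zeroLocus_iff, not_or] using hqIJ
    exact mul_ne_zero hf hh (by simpa using hq _ (Ideal.mul_mem_mul hfI hhJ))

theorem isZClosed_sUnion {𝒮 : Set (Set (Pt k))} (hfin : 𝒮.Finite) (hcl : ∀ S ∈ 𝒮, IsZClosed S) :
    IsZClosed (⋃₀ 𝒮) := by
  induction 𝒮, hfin using Set.Finite.induction_on with
  | empty => simpa using isZClosed_empty
  | @insert S 𝒮 _ _ ih =>
    rw [Set.sUnion_insert]
    exact (hcl S (Set.mem_insert S 𝒮)).union (ih fun T hT => hcl T (Set.mem_insert_of_mem S hT))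

theorem isZClosed_zclos (Δ : Set (Pt k)) : IsZClosed (zclos Δ) := ⟨_, rfl⟩

theorem IsZClosed.galAct_image {Z : Set (Pt k)} (hZ : IsZClosed Z) (g : K̄ ≃ₐ[k] K̄) :
    IsZClosed (galAct g '' Z) := by
  obtain ⟨I, rfl⟩ := hZ
  rw [← Ideal.span_eq I, galAct_image_zeroLocus_span]
  exact ⟨_, rfl⟩

theorem IsZIrreducible.galAct_image {S : Set (Pt k)} (hS : IsZIrreducible S) (g : K̄ ≃ₐ[k] K̄) :
    IsZIrreducible (galAct g '' S) := by
  refine ⟨hS.1.image _, fun Z₁ Z₂ h₁ h₂ h => ?_⟩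
  simp only [Set.image_subset_iff, Set.preimage_union, preimage_galAct] at h ⊢
  exact hS.2 _ _ (h₁.galAct_image _) (h₂.galAct_image _) h

theorem IsZIrreducible.exists_subset_of_subset_sUnion {C : Set (Pt k)} (hC : IsZIrreducible C)
    {𝒮 : Set (Set (Pt k))} (hfin : 𝒮.Finite) (hcl : ∀ S ∈ 𝒮, IsZClosed S) (hsub : C ⊆ ⋃₀ 𝒮) :
    ∃ S ∈ 𝒮, C ⊆ S := by
  induction 𝒮, hfin using Set.Finite.induction_on with
  | empty =>
    obtain ⟨p, hp⟩ := hC.1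
    simpa using hsub hp
  | @insert S 𝒮 _ h𝒮 ih =>
    have hcl' : ∀ T ∈ 𝒮, IsZClosed T := fun T hT => hcl T (Set.mem_insert_of_mem S hT)
    rw [Set.sUnion_insert] at hsub
    rcases hC.2 _ _ (hcl S (Set.mem_insert S 𝒮)) (isZClosed_sUnion h𝒮 hcl') hsub with h | h
    · exact ⟨S, Set.mem_insert S 𝒮, h⟩
    · obtain ⟨T, hT, hCT⟩ := ih hcl' h
      exact ⟨T, Set.mem_insert_of_mem S hT, hCT⟩

theorem IsZIrreducible.sUnion_of_isChain {c : Set (Set (Pt k))} (hc : ∀ E ∈ c, IsZIrreducible E)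
    (hchain : IsChain (· ⊆ ·) c) (hne : c.Nonempty) : IsZIrreducible (⋃₀ c) := by
  obtain ⟨E, hE⟩ := hne
  refine ⟨(hc E hE).1.mono (Set.subset_sUnion_of_mem hE), fun Z₁ Z₂ h₁ h₂ hsub => ?_⟩
  by_contra! hcon
  obtain ⟨x, ⟨Ex, hEx, hxEx⟩, hx₁⟩ := Set.not_subset.mp hcon.1
  obtain ⟨y, ⟨Ey, hEy, hyEy⟩, hy₂⟩ := Set.not_subset.mp hcon.2
  obtain ⟨F, hF, hxF, hyF⟩ : ∃ F ∈ c, x ∈ F ∧ y ∈ F := by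
    rcases hchain.total hEx hEy with h | h
    exacts [⟨Ey, hEy, h hxEx, hyEy⟩, ⟨Ex, hEx, hxEx, h hyEy⟩]
  rcases (hc F hF).2 Z₁ Z₂ h₁ h₂ ((Set.subset_sUnion_of_mem hF).trans hsub) with h | h
  exacts [hx₁ (h hxF), hy₂ (h hyF)]

theorem exists_isIrredComponentOf_superset {S D₀ : Set (Pt k)} (hD₀ : IsZIrreducible D₀)
    (hsub : D₀ ⊆ S) : ∃ D, IsIrredComponentOf D S ∧ D₀ ⊆ D := by
  obtain ⟨D, hD₀D, hmax⟩ := zorn_subset_nonempty {E : Set (Pt k) | IsZIrreducible E ∧ E ⊆ S}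
    (fun c hc hchain hne => ⟨⋃₀ c,
      ⟨IsZIrreducible.sUnion_of_isChain (fun E hE => (hc hE).1) hchain hne,
        Set.sUnion_subset fun E hE => (hc hE).2⟩,
      fun _ => Set.subset_sUnion_of_mem⟩) D₀ ⟨hD₀, hsub⟩
  exact ⟨D, ⟨hmax.prop.1, hmax.prop.2, fun C hC hCS hDC =>
    hDC.antisymm (hmax.2 ⟨hC, hCS⟩ hDC)⟩, hD₀D⟩

end ZariskiTopology

section Descent

variable {k : Type*} [Field k]

local notation "K̄" => AlgebraicClosure k

theorem galAct_image_zclos_subset_hatSet (Δ : Set (Pt k)) (g : K̄ ≃ₐ[k] K̄) :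
    galAct g '' zclos Δ ⊆ hatSet Δ := by
  rintro _ ⟨p, hp, rfl⟩ b hb
  have hbΔ : map (algebraMap k K̄) b ∈ vanishingIdeal K̄ Δ :=
    mem_vanishingIdeal_iff.mpr fun x hx => by rw [aeval_map_algebraMap]; exact hb x hx
  have hbp : aeval p b = 0 := by
    rw [← aeval_map_algebraMap K̄]
    exact mem_zeroLocus_iff.mp hp _ hbΔ
  calc aeval (galAct g p) b = g (aeval p b) := (comp_aeval_apply p (g : K̄ →ₐ[k] K̄) b).symm
    _ = 0 := by rw [hbp, map_zero]

theorem finite_range_galAct_image_zclos (Δ : Set (Pt k)) :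
    (Set.range fun g : K̄ ≃ₐ[k] K̄ => galAct g '' zclos Δ).Finite := by
  -- each translate is cut out by the conjugates of finitely many generators of `I(Δ)`
  obtain ⟨t, ht⟩ := IsNoetherian.noetherian (vanishingIdeal K̄ Δ)
  set O := ⋃ f ∈ (t : Set (MvPolynomial (Fin 2) K̄)),
    Set.range fun g : K̄ ≃ₐ[k] K̄ => map (g : K̄ →+* K̄) f
  have hO : O.Finite := t.finite_toSet.biUnion fun f _ => finite_range_map_algEquiv f
  refine (hO.finite_subsets.image fun T => zeroLocus K̄ (Ideal.span T)).subset ?_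
  rintro _ ⟨g, rfl⟩
  refine ⟨map (g : K̄ →+* K̄) '' t, ?_, ?_⟩
  · rintro _ ⟨f, hf, rfl⟩
    exact Set.mem_biUnion hf ⟨g, rfl⟩
  · have hspan : Ideal.span (t : Set (MvPolynomial (Fin 2) K̄)) = vanishingIdeal K̄ Δ := ht
    simp only [← galAct_image_zeroLocus_span, hspan, zclos]

theorem hatSet_eq_sUnion [PerfectField k] (Δ : Set (Pt k)) :
    hatSet Δ = ⋃₀ Set.range fun g : K̄ ≃ₐ[k] K̄ => galAct g '' zclos Δ := by
  refine Set.Subset.antisymm (fun q hq => ?_) (Set.sUnion_subset ?_)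
  · obtain ⟨I, hI⟩ := isZClosed_sUnion (finite_range_galAct_image_zclos Δ)
      (Set.forall_mem_range.mpr fun g => (isZClosed_zclos Δ).galAct_image g)
    rw [hI, mem_zeroLocus_iff]
    intro P hP
    refine eval_eq_zero_of_forall_map_eval_eq_zero (k := k) hq fun g x hx => ?_
    have hx' : galAct g.symm x ∈ zeroLocus K̄ I :=
      hI ▸ ⟨_, ⟨g.symm, rfl⟩, x, zeroLocus_vanishingIdeal_le Δ hx, rfl⟩
    rw [← galAct_galAct_symm g x, eval_galAct_map]
    exact (congrArg g (mem_zeroLocus_iff.mp hx' P hP)).trans (map_zero g)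
  · rintro _ ⟨g, rfl⟩
    exact galAct_image_zclos_subset_hatSet Δ g

end Descent

/-- Every irreducible component of `Δ̂` is the image under some
`g ∈ Gal(k̄/k)` of an irreducible component of the Zariski closure of `Δ`. -/
theorem stmt_1 (k : Type*) [Field k] [PerfectField k] (Δ C : Set (Pt k))
    (hC : IsIrredComponentOf C (hatSet Δ)) :
    ∃ (g : AlgebraicClosure k ≃ₐ[k] AlgebraicClosure k) (D : Set (Pt k)),
      IsIrredComponentOf D (zclos Δ) ∧ C = galAct g '' D := by
  obtain ⟨hC_irr, hC_sub, hC_max⟩ := hC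
  rw [hatSet_eq_sUnion] at hC_sub
  obtain ⟨_, ⟨g, rfl⟩, hCg⟩ := hC_irr.exists_subset_of_subset_sUnion
    (finite_range_galAct_image_zclos Δ)
    (Set.forall_mem_range.mpr fun g => (isZClosed_zclos Δ).galAct_image g) hC_sub
  obtain ⟨D, hD, hCD⟩ := exists_isIrredComponentOf_superset (hC_irr.galAct_image g.symm)
    (by simpa only [galAct_symm_image_galAct_image] using Set.image_mono (f := galAct g.symm) hCg)
  refine ⟨g, D, hD, hC_max _ (hD.1.galAct_image g)
    ((Set.image_mono hD.2.1).trans (galAct_image_zclos_subset_hatSet Δ g)) ?_⟩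
  simpa only [galAct_image_galAct_symm_image] using Set.image_mono (f := galAct g) hCD
end

section
/- Let H ⊆ Aut(𝔸²) be a subgroup and p ∈ k̄² a point such that the Zariski closure Δ̄ of the orbit O_H(p) is infinite and is not all of k̄² (i.e. Δ̄ is a curve). Then: (i) for any two irreducible components C and C' of Δ̄ there exists h ∈ H with h(C) = C'; (ii) for every irreducible component C of Δ̄ the stabilizer Aut(𝔸², C) is an infinite group. -/
open MvPolynomial

/-!
In the Zariski topology of `k̄²`, induced from `Spec k̄[x,y]`, the plane is a Noetherian space on
which `H` acts by homeomorphisms, so the orbit closure has finitely many irreducible components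
and `H` permutes them. Each component contains an orbit point lying on no other component, and
moving such points onto each other by elements of `H` gives transitivity. The stabilizer of a
component then has finite index in `H`, which is infinite because the orbit is.
-/

open Pointwise Topology TopologicalSpace MulAction

section Components

variable {X : Type*} [TopologicalSpace X] {S C T : Set X}

def irreducibleComponentsOf (S : Set X) : Set (Set X) :=
  {C | Maximal (fun t => IsIrreducible t ∧ t ⊆ S) C}

lemma eq_of_mem_irreducibleComponentsOf (hC : C ∈ irreducibleComponentsOf S)
    (hT : IsIrreducible T) (hTS : T ⊆ S) (hCT : C ⊆ T) : C = T :=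
  subset_antisymm hCT (hC.2 ⟨hT, hTS⟩ hCT)

lemma isClosed_of_mem_irreducibleComponentsOf (hS : IsClosed S)
    (hC : C ∈ irreducibleComponentsOf S) : IsClosed C :=
  closure_subset_iff_isClosed.1 <|
    hC.2 ⟨isIrreducible_iff_closure.2 hC.1.1, closure_minimal hC.1.2 hS⟩ subset_closure

lemma IsIrreducible.exists_subset_of_subset_sUnion {F : Set (Set X)}
    (hT : IsIrreducible T) (hF : F.Finite) (hcl : ∀ z ∈ F, IsClosed z) (h : T ⊆ ⋃₀ F) :
    ∃ z ∈ F, T ⊆ z := by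
  obtain ⟨z, hz, hTz⟩ := isIrreducible_iff_sUnion_isClosed.1 hT hF.toFinset
    (by simpa using hcl) (by simpa using h)
  exact ⟨z, hF.mem_toFinset.1 hz, hTz⟩

variable [NoetherianSpace X]

lemma finite_irreducibleComponentsOf (hS : IsClosed S) : (irreducibleComponentsOf S).Finite := by
  obtain ⟨F, hF, hcl, hirr, rfl⟩ := NoetherianSpace.exists_finite_set_isClosed_irreducible hS
  refine hF.subset fun C hC => ?_
  obtain ⟨Z, hZ, hCZ⟩ := hC.1.1.exists_subset_of_subset_sUnion hF hcl hC.1.2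
  rwa [eq_of_mem_irreducibleComponentsOf hC (hirr Z hZ) (Set.subset_sUnion_of_mem hZ) hCZ]

lemma IsIrreducible.exists_mem_irreducibleComponentsOf_superset (hS : IsClosed S)
    (hT : IsIrreducible T) (hTS : T ⊆ S) : ∃ C ∈ irreducibleComponentsOf S, T ⊆ C := by
  obtain ⟨F, hF, hcl, hirr, rfl⟩ := NoetherianSpace.exists_finite_set_isClosed_irreducible hS
  obtain ⟨Z₀, hZ₀, hTZ₀⟩ := hT.exists_subset_of_subset_sUnion hF hcl hTS
  set above : Set (Set X) := {Z | Z ∈ F ∧ Z₀ ⊆ Z}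
  obtain ⟨Z, hZ₀Z, hZmax⟩ := (hF.subset fun Z (hZ : Z ∈ above) => hZ.1).exists_le_maximal
    (show Z₀ ∈ above from ⟨hZ₀, subset_rfl⟩)
  have hZ : Z ∈ F := hZmax.1.1
  refine ⟨Z, ⟨⟨hirr Z hZ, Set.subset_sUnion_of_mem hZ⟩, fun T' hT' hZT' => ?_⟩, hTZ₀.trans hZ₀Z⟩
  obtain ⟨Z', hZ', hT'Z'⟩ := hT'.1.exists_subset_of_subset_sUnion hF hcl hT'.2
  exact hT'Z'.trans (hZmax.2 ⟨hZ', hZ₀Z.trans (hZT'.trans hT'Z')⟩ (hZT'.trans hT'Z'))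

lemma sUnion_irreducibleComponentsOf (hS : IsClosed S) : ⋃₀ irreducibleComponentsOf S = S := by
  refine subset_antisymm (Set.sUnion_subset fun C hC => hC.1.2) fun x hx => ?_
  obtain ⟨C, hC, hxC⟩ := isIrreducible_singleton.exists_mem_irreducibleComponentsOf_superset hS
    (Set.singleton_subset_iff.2 hx)
  exact ⟨C, hC, hxC rfl⟩

/-- If every point of `Ω ∩ C` lay on another component, `Ω` and hence its closure would be
covered by the other components, and the irreducible `C` would sit inside one of them. -/
lemma exists_mem_inter_forall_mem_irreducibleComponentsOf_closure (Ω : Set X)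
    (hC : C ∈ irreducibleComponentsOf (closure Ω)) :
    ∃ q ∈ Ω ∩ C, ∀ D ∈ irreducibleComponentsOf (closure Ω), q ∈ D → D = C := by
  by_contra! hcon
  set others := irreducibleComponentsOf (closure Ω) \ {C}
  have hfin : others.Finite := (finite_irreducibleComponentsOf isClosed_closure).sdiff
  have hcl : ∀ D ∈ others, IsClosed D := fun D hD =>
    isClosed_of_mem_irreducibleComponentsOf isClosed_closure hD.1
  have hΩ : Ω ⊆ ⋃₀ others := by
    intro x hx
    obtain ⟨D, hD, hxD⟩ := (sUnion_irreducibleComponentsOf (X := X) isClosed_closure).ge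
      (subset_closure hx)
    by_cases hDC : D = C
    · obtain ⟨D', hD', hxD', hD'C⟩ := hcon x ⟨hx, hDC ▸ hxD⟩
      exact ⟨D', ⟨hD', hD'C⟩, hxD'⟩
    · exact ⟨D, ⟨hD, hDC⟩, hxD⟩
  have hothers : IsClosed (⋃₀ others) := Set.sUnion_eq_biUnion ▸ hfin.isClosed_biUnion hcl
  obtain ⟨D, ⟨hD, hDC⟩, hCD⟩ := hC.1.1.exists_subset_of_subset_sUnion hfin hcl
    (hC.1.2.trans (closure_minimal hΩ hothers))
  exact hDC (eq_of_mem_irreducibleComponentsOf hC hD.1.1 hD.1.2 hCD).symm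

end Components

section Action

variable {G X : Type*} [Group G] [MulAction G X] [TopologicalSpace X] [ContinuousConstSMul G X]

instance Subgroup.continuousConstSMul (H : Subgroup G) : ContinuousConstSMul H X :=
  ⟨fun h => continuous_const_smul (h : G)⟩

lemma IsIrreducible.smul {C : Set X} (hC : IsIrreducible C) (g : G) : IsIrreducible (g • C) :=
  hC.image _ (continuous_const_smul g).continuousOn

lemma smul_mem_irreducibleComponentsOf {S C : Set X} (g : G)
    (hC : C ∈ irreducibleComponentsOf S) : g • C ∈ irreducibleComponentsOf (g • S) := by
  refine ⟨⟨hC.1.1.smul g, Set.smul_set_mono hC.1.2⟩, fun T ⟨hT, hTS⟩ hgCT => ?_⟩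
  rw [Set.smul_set_subset_iff_subset_inv_smul_set] at hgCT
  rw [Set.subset_smul_set_iff] at hTS ⊢
  exact hC.2 ⟨hT.smul g⁻¹, hTS⟩ hgCT

lemma smul_mem_irreducibleComponentsOf_closure_orbit {C : Set X} (g : G) (p : X)
    (hC : C ∈ irreducibleComponentsOf (closure (orbit G p))) :
    g • C ∈ irreducibleComponentsOf (closure (orbit G p)) := by
  simpa only [← closure_smul, smul_orbit] using smul_mem_irreducibleComponentsOf g hC

variable [NoetherianSpace X]

theorem exists_smul_eq_of_mem_irreducibleComponentsOf_closure_orbit {p : X} {C C' : Set X}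
    (hC : C ∈ irreducibleComponentsOf (closure (orbit G p)))
    (hC' : C' ∈ irreducibleComponentsOf (closure (orbit G p))) : ∃ g : G, g • C = C' := by
  obtain ⟨_, ⟨⟨a, rfl⟩, haC⟩, -⟩ := exists_mem_inter_forall_mem_irreducibleComponentsOf_closure _ hC
  obtain ⟨_, ⟨⟨b, rfl⟩, -⟩, hbC'⟩ :=
    exists_mem_inter_forall_mem_irreducibleComponentsOf_closure _ hC'
  refine ⟨b * a⁻¹, hbC' _ (smul_mem_irreducibleComponentsOf_closure_orbit _ p hC) ?_⟩
  exact ⟨a • p, haC, by simp [mul_smul]⟩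

theorem infinite_stabilizer_of_mem_irreducibleComponentsOf_closure_orbit {p : X} {C : Set X}
    (hp : (orbit G p).Infinite) (hC : C ∈ irreducibleComponentsOf (closure (orbit G p))) :
    (stabilizer G C : Set G).Infinite := by
  have hfin : (orbit G C).Finite := (finite_irreducibleComponentsOf isClosed_closure).subset <| by
    rintro _ ⟨g, rfl⟩
    exact smul_mem_irreducibleComponentsOf_closure_orbit g p hC
  have : Finite (G ⧸ stabilizer G C) :=
    have := hfin.to_subtype
    .of_equiv _ (orbitEquivQuotientStabilizer G C)
  refine fun hstab => hp ?_
  have : Finite G := (Subgroup.finite_iff_finite_and_finiteIndex _).2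
    ⟨hstab.to_subtype, Subgroup.finiteIndex_of_finite_quotient⟩
  exact Set.finite_range _

end Action

noncomputable section

namespace PlaneAut

variable {k : Type*} [Field k]

lemma aeval_actp (φ : PlaneAut k) (q : Pt k) (P : MvPolynomial (Fin 2) k) :
    aeval (actp φ q) P = aeval q (φ.symm P) := by
  change (aeval (actp φ q)) P = ((aeval q).comp φ.symm.toAlgHom) P
  congr 1
  ext i
  simp [actp]

instance : MulAction (PlaneAut k) (Pt k) where
  smul := actp
  one_smul q := by funext i; simp [HSMul.hSMul, actp, AlgEquiv.aut_one]
  mul_smul φ ψ q := by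
    funext i
    change aeval q ((φ * ψ).symm (X i)) = aeval (actp ψ q) (φ.symm (X i))
    rw [aeval_actp]
    rfl

lemma smul_def (φ : PlaneAut k) (q : Pt k) : φ • q = actp φ q := rfl

def pullback (φ : PlaneAut k) :
    MvPolynomial (Fin 2) (AlgebraicClosure k) →ₐ[AlgebraicClosure k]
      MvPolynomial (Fin 2) (AlgebraicClosure k) :=
  bind₁ fun i => map (emb k) (φ.symm (X i))

lemma aeval_smul (φ : PlaneAut k) (q : Pt k) (P : MvPolynomial (Fin 2) (AlgebraicClosure k)) :
    aeval (φ • q) P = aeval q (pullback φ P) := by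
  rw [pullback, aeval_bind₁]
  congr 2
  funext i
  simp [smul_def, actp, aeval_map_algebraMap]

end PlaneAut

variable {k : Type*} [Field k]

/-- The Zariski topology of `k̄²`, pulled back from `Spec k̄[x,y]` along `q ↦ 𝔪_q`. -/
instance : TopologicalSpace (Pt k) :=
  .induced (pointToPoint (k := AlgebraicClosure k)) inferInstance

lemma isInducing_pointToPoint :
    IsInducing (pointToPoint (k := AlgebraicClosure k) : Pt k → _) :=
  ⟨rfl⟩

instance : NoetherianSpace (Pt k) := isInducing_pointToPoint.noetherianSpace

lemma preimage_pointToPoint_zeroLocus (I : Ideal (MvPolynomial (Fin 2) (AlgebraicClosure k))) :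
    (pointToPoint (k := AlgebraicClosure k) : Pt k → _) ⁻¹' PrimeSpectrum.zeroLocus I =
      zeroLocus (AlgebraicClosure k) I := by
  ext q
  simp [PrimeSpectrum.mem_zeroLocus, Set.subset_def, mem_zeroLocus_iff, pointToPoint]

lemma zclos_eq_closure (Δ : Set (Pt k)) : zclos Δ = closure Δ := by
  rw [isInducing_pointToPoint.closure_eq_preimage_closure_image,
    ← PrimeSpectrum.zeroLocus_vanishingIdeal_eq_closure, vanishingIdeal_pointToPoint,
    preimage_pointToPoint_zeroLocus, zclos]

lemma isZClosed_iff_isClosed {S : Set (Pt k)} : IsZClosed S ↔ IsClosed S := by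
  simp only [IsZClosed, isInducing_pointToPoint.isClosed_iff,
    PrimeSpectrum.isClosed_iff_zeroLocus_ideal]
  constructor
  · rintro ⟨I, rfl⟩
    exact ⟨_, ⟨I, rfl⟩, preimage_pointToPoint_zeroLocus I⟩
  · rintro ⟨_, ⟨I, rfl⟩, rfl⟩
    exact ⟨I, preimage_pointToPoint_zeroLocus I⟩

lemma isZIrreducible_iff_isIrreducible {S : Set (Pt k)} : IsZIrreducible S ↔ IsIrreducible S := by
  simp only [IsZIrreducible, IsIrreducible, isPreirreducible_iff_isClosed_union_isClosed,
    isZClosed_iff_isClosed]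

lemma IsIrredComponentOf.mem_irreducibleComponentsOf {C S : Set (Pt k)}
    (h : IsIrredComponentOf C S) : C ∈ irreducibleComponentsOf S :=
  ⟨⟨isZIrreducible_iff_isIrreducible.1 h.1, h.2.1⟩,
    fun T hT hCT => (h.2.2 T (isZIrreducible_iff_isIrreducible.2 hT.1) hT.2 hCT).ge⟩

instance : T1Space (Pt k) := by
  refine ⟨fun x => closure_subset_iff_isClosed.1 fun q hq => ?_⟩
  rw [← zclos_eq_closure] at hq
  funext i
  have hi := hq (X i - C (x i)) (by simp)
  simpa [sub_eq_zero] using hi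

lemma pointToPoint_smul (φ : PlaneAut k) (q : Pt k) :
    pointToPoint (k := AlgebraicClosure k) (φ • q) =
      PrimeSpectrum.comap φ.pullback.toRingHom (pointToPoint q) := by
  ext P
  simp only [PrimeSpectrum.comap_asIdeal, Ideal.mem_comap, pointToPoint,
    mem_vanishingIdeal_singleton_iff, AlgHom.toRingHom_eq_coe, RingHom.coe_coe, PlaneAut.aeval_smul]

instance : ContinuousConstSMul (PlaneAut k) (Pt k) := by
  refine ⟨fun φ => isInducing_pointToPoint.continuous_iff.2 ?_⟩
  simp only [Function.comp_def, pointToPoint_smul]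
  exact (PrimeSpectrum.continuous_comap _).comp isInducing_pointToPoint.continuous

lemma orbSub_eq_orbit (H : Subgroup (PlaneAut k)) (p : Pt k) : orbSub H p = orbit H p :=
  Set.ext fun _ => ⟨fun ⟨h, hh, hq⟩ => ⟨⟨h, hh⟩, hq⟩, fun ⟨h, hq⟩ => ⟨h, h.2, hq⟩⟩

end

theorem stmt_4_general (k : Type*) [Field k] (H : Subgroup (PlaneAut k)) (p : Pt k)
    (h1 : (zclos (orbSub H p)).Infinite) :
    (∀ C C' : Set (Pt k), IsIrredComponentOf C (zclos (orbSub H p)) →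
      IsIrredComponentOf C' (zclos (orbSub H p)) → ∃ h ∈ H, actp h '' C = C') ∧
    (∀ C : Set (Pt k), IsIrredComponentOf C (zclos (orbSub H p)) → (stabSet C).Infinite) := by
  rw [zclos_eq_closure, orbSub_eq_orbit] at h1 ⊢
  have hp : (orbit H p).Infinite := fun hfin => h1 (by rwa [hfin.isClosed.closure_eq])
  refine ⟨fun C C' hC hC' => ?_, fun C hC => ?_⟩
  · obtain ⟨g, hg⟩ := exists_smul_eq_of_mem_irreducibleComponentsOf_closure_orbit
      hC.mem_irreducibleComponentsOf hC'.mem_irreducibleComponentsOf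
    exact ⟨g, g.2, hg⟩
  · refine ((infinite_stabilizer_of_mem_irreducibleComponentsOf_closure_orbit hp
      hC.mem_irreducibleComponentsOf).image Subtype.val_injective.injOn).mono ?_
    rintro _ ⟨g, hg, rfl⟩
    exact hg

/-- If the Zariski closure of `O_H(p)` is infinite and not the whole
plane (i.e. it is a curve), then (i) `H` acts transitively on its irreducible
components, and (ii) the stabilizer of each irreducible component is infinite. -/
theorem stmt_4 (k : Type*) [Field k] [PerfectField k] (H : Subgroup (PlaneAut k)) (p : Pt k)
    (h1 : (zclos (orbSub H p)).Infinite)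
    (h2 : zclos (orbSub H p) ≠ Set.univ) :
    (∀ C C' : Set (Pt k), IsIrredComponentOf C (zclos (orbSub H p)) →
      IsIrredComponentOf C' (zclos (orbSub H p)) → ∃ h ∈ H, actp h '' C = C') ∧
    (∀ C : Set (Pt k), IsIrredComponentOf C (zclos (orbSub H p)) → (stabSet C).Infinite) :=
  stmt_4_general k H p h1
end

section
/- Assume char k = 2 and let μ ∈ k* be such that the polynomial x² + μx + 1 has no root in k. Let C = {q ∈ k̄² : q₁² + μq₁q₂ + q₂² = 1} and p = (x_p, y_p) ∈ C. Then an automorphism ψ ∈ Aut(𝔸², C) satisfies ψ(p) = p if and only if ψ is the identity, or the elements a := μx_p y_p + 1 and b := μy_p² both lie in k and ψ is the linear automorphism q ↦ (a·q₁ + (μa + b)·q₂, b·q₁ + a·q₂). -/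
open MvPolynomial

/-!
Over `k̄` the conic factors as `u v = 1` with `u = x + α y`, `v = x + β y`, where `α, β` are
the roots of `t² + μ t + 1`; they are distinct because `α + β = μ ≠ 0` in characteristic `2`.
By the Nullstellensatz an automorphism `ψ` preserving `C` multiplies `u v - 1` by a constant `c`,
so `ψ*u · ψ*v = c u v + (1 - c)`. For `c ≠ 1` the right-hand side is irreducible while `ψ*u`
and `ψ*v` are not units, hence `c = 1`, and unique factorisation of `u v` shows that `ψ`
rescales the two asymptotic directions `u, v` or swaps them. Fixing `p` determines the scalars:
in the first case `ψ = id`; in the second `ψ` is the linear map of the statement, whose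
coefficients are the coordinates of `ψ(1, 0)` and therefore lie in `k`.
-/

noncomputable section ExtendScalars

variable {R S ι : Type*} [CommSemiring R] [CommSemiring S] [Algebra R S]

variable (S) in
def extendScalars (φ : MvPolynomial ι R →ₐ[R] MvPolynomial ι R) :
    MvPolynomial ι S →ₐ[S] MvPolynomial ι S :=
  aeval fun i => map (algebraMap R S) (φ (X i))

@[simp]
theorem extendScalars_X (φ : MvPolynomial ι R →ₐ[R] MvPolynomial ι R) (i : ι) :
    extendScalars S φ (X i) = map (algebraMap R S) (φ (X i)) :=
  aeval_X _ _

theorem extendScalars_map (φ : MvPolynomial ι R →ₐ[R] MvPolynomial ι R)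
    (P : MvPolynomial ι R) :
    extendScalars S φ (map (algebraMap R S) P) = map (algebraMap R S) (φ P) := by
  induction P using MvPolynomial.induction_on with
  | C r => simp [← algebraMap_eq]
  | add P Q hP hQ => simp [hP, hQ]
  | mul_X P i hP => simp [hP]

theorem extendScalars_comp (φ χ : MvPolynomial ι R →ₐ[R] MvPolynomial ι R) :
    extendScalars S (φ.comp χ) = (extendScalars S φ).comp (extendScalars S χ) := by
  ext i : 1
  simp [extendScalars_map]

theorem extendScalars_id : extendScalars S (AlgHom.id R (MvPolynomial ι R)) = AlgHom.id S _ := by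
  ext i : 1
  simp

theorem eval_extendScalars (φ : MvPolynomial ι R →ₐ[R] MvPolynomial ι R) (q : ι → S)
    (P : MvPolynomial ι S) :
    eval q (extendScalars S φ P) = eval (fun i => aeval q (φ (X i))) P := by
  induction P using MvPolynomial.induction_on with
  | C r => simp
  | add P Q hP hQ => simp [hP, hQ]
  | mul_X P i hP => simp [hP, eval_map, aeval_def]

variable (S) in
def extendScalarsEquiv (ψ : MvPolynomial ι R ≃ₐ[R] MvPolynomial ι R) :
    MvPolynomial ι S ≃ₐ[S] MvPolynomial ι S :=
  AlgEquiv.ofAlgHom (extendScalars S ψ.toAlgHom) (extendScalars S ψ.symm.toAlgHom)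
    (by rw [← extendScalars_comp]; simp [extendScalars_id])
    (by rw [← extendScalars_comp]; simp [extendScalars_id])

end ExtendScalars

section Nullstellensatz

variable {K ι : Type*} [Field K] [IsAlgClosed K] [Finite ι]

theorem dvd_of_forall_eval_eq_zero {F G : MvPolynomial ι K} (hF : Prime F)
    (h : ∀ q, eval q F = 0 → eval q G = 0) : F ∣ G := by
  rw [← Ideal.mem_span_singleton,
    ← ((Ideal.span_singleton_prime hF.ne_zero).mpr hF).radical,
    ← vanishingIdeal_zeroLocus_eq_radical (K := K)]
  intro q hq
  simpa using h q (by simpa using hq F (Ideal.mem_span_singleton_self F))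

theorem associated_of_forall_eval_eq_zero (σ : MvPolynomial ι K ≃ₐ[K] MvPolynomial ι K)
    {F : MvPolynomial ι K} (hF : Prime F)
    (h₁ : ∀ q, eval q F = 0 → eval q (σ F) = 0)
    (h₂ : ∀ q, eval q F = 0 → eval q (σ.symm F) = 0) : Associated (σ F) F :=
  associated_of_dvd_dvd (by simpa using map_dvd σ (dvd_of_forall_eval_eq_zero hF h₂))
    (dvd_of_forall_eval_eq_zero hF h₁)

end Nullstellensatz

theorem associated_and_associated_of_mul_eq_mul {M : Type*} [CommMonoidWithZero M]
    [IsCancelMulZero M]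
    {a b x y : M} (hx : x ≠ 0) (hy : Irreducible y) (hb : ¬IsUnit b) (hxa : x ∣ a)
    (h : a * b = x * y) : Associated x a ∧ Associated b y := by
  obtain ⟨w, rfl⟩ := hxa
  have hwb : y = w * b := mul_left_cancel₀ hx (by rw [← h, mul_assoc])
  have hw : IsUnit w := (hy.isUnit_or_isUnit hwb).resolve_right hb
  exact ⟨associated_mul_unit_right x w hw, ⟨hw.unit, by rw [hwb]; simp [mul_comm]⟩⟩

section TwoVariables

variable {L : Type*} [Field L]

theorem irreducible_C_mul_X_mul_X_add_C {c e : L} (hc : c ≠ 0) (he : e ≠ 0) :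
    Irreducible (C c * (X 0 * X 1) + C e : MvPolynomial (Fin 2) L) := by
  rw [← MulEquiv.irreducible_iff (finSuccEquiv L 1)]
  have : finSuccEquiv L 1 (C c * (X 0 * X 1) + C e)
      = Polynomial.C (C c * X 0) * Polynomial.X + Polynomial.C (C e) := by
    rw [show (1 : Fin 2) = Fin.succ 0 from rfl]
    simp only [map_add, map_mul, finSuccEquiv_X_zero, finSuccEquiv_X_succ, ← algebraMap_eq,
      AlgEquiv.commutes, Polynomial.algebraMap_apply]
    simp only [algebraMap_eq]
    ring
  rw [this]
  exact Polynomial.irreducible_C_mul_X_add_C (by simp [hc, X_ne_zero])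
    ((isUnit_iff_ne_zero.mpr he).map _).isRelPrime_right

theorem exists_eq_C_mul_of_associated {ι : Type*} {P Q : MvPolynomial ι L}
    (h : Associated P Q) : ∃ s ≠ 0, Q = C s * P := by
  obtain ⟨w, rfl⟩ := h
  obtain ⟨s, hs, hw⟩ := isUnit_iff_eq_C_of_isReduced.mp w.isUnit
  exact ⟨s, hs.ne_zero, by rw [hw, mul_comm]⟩

theorem exists_eq_C_mul_of_associated_X_mul_X_sub_one
    (σ : MvPolynomial (Fin 2) L ≃ₐ[L] MvPolynomial (Fin 2) L)
    (h : Associated (σ (X 0 * X 1 - 1)) (X 0 * X 1 - 1)) :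
    ∃ s t : L, (σ (X 0) = C s * X 0 ∧ σ (X 1) = C t * X 1) ∨
      (σ (X 0) = C s * X 1 ∧ σ (X 1) = C t * X 0) := by
  obtain ⟨c, hc0, hc⟩ := exists_eq_C_mul_of_associated h.symm
  have hprod : σ (X 0) * σ (X 1) = C c * (X 0 * X 1) + C (1 - c) := by
    rw [map_sub, map_one, map_mul] at hc
    rw [map_sub, map_one]
    linear_combination hc
  have hX : ∀ i, Prime (X i : MvPolynomial (Fin 2) L) := fun _ => X_prime
  have hσX : ∀ i, ¬IsUnit (σ (X i)) := fun i => by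
    rw [isUnit_map_iff]
    exact (hX i).not_isUnit
  have hc1 : c = 1 := by
    by_contra hc1
    have hirr := irreducible_C_mul_X_mul_X_add_C hc0 (sub_ne_zero.mpr (Ne.symm hc1))
    exact (hirr.isUnit_or_isUnit hprod.symm).elim (hσX 0) (hσX 1)
  have huv : σ (X 0) * σ (X 1) = X 0 * X 1 := by
    rw [hprod, hc1, sub_self, map_zero, map_one, one_mul, add_zero]
  have hdvd : X 0 ∣ σ (X 0) * σ (X 1) := by
    rw [huv]
    exact dvd_mul_right _ _
  rcases (hX 0).dvd_or_dvd hdvd with hd | hd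
  · obtain ⟨h0, h1⟩ := associated_and_associated_of_mul_eq_mul (X_ne_zero 0) (hX 1).irreducible
      (hσX 1) hd huv
    obtain ⟨s, -, hs⟩ := exists_eq_C_mul_of_associated h0
    obtain ⟨t, -, ht⟩ := exists_eq_C_mul_of_associated h1.symm
    exact ⟨s, t, .inl ⟨hs, ht⟩⟩
  · obtain ⟨h1, h0⟩ := associated_and_associated_of_mul_eq_mul (X_ne_zero 0) (hX 1).irreducible
      (hσX 0) hd (by rw [mul_comm, huv])
    obtain ⟨s, -, hs⟩ := exists_eq_C_mul_of_associated h0.symm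
    obtain ⟨t, -, ht⟩ := exists_eq_C_mul_of_associated h1
    exact ⟨s, t, .inr ⟨hs, ht⟩⟩

noncomputable def linearChange (α β : L) (h : α ≠ β) :
    MvPolynomial (Fin 2) L ≃ₐ[L] MvPolynomial (Fin 2) L :=
  have hd : (C (β - α)⁻¹ * (C β - C α) : MvPolynomial (Fin 2) L) = 1 := by
    rw [← map_sub, ← map_mul, inv_mul_cancel₀ (sub_ne_zero.mpr h.symm), map_one]
  AlgEquiv.ofAlgHom (aeval ![X 0 + C α * X 1, X 0 + C β * X 1])
    (aeval ![C ((β - α)⁻¹ * β) * X 0 - C ((β - α)⁻¹ * α) * X 1,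
      C (β - α)⁻¹ * (X 1 - X 0)])
    (by
      ext i : 1
      fin_cases i <;>
        simp only [Fin.zero_eta, Fin.mk_one, AlgHom.comp_apply, AlgHom.id_apply, aeval_X, aeval_C,
          map_sub, map_mul, algebraMap_eq, Matrix.cons_val_zero,
          Matrix.cons_val_one, Matrix.cons_val_fin_one]
      · linear_combination (X 0 : MvPolynomial (Fin 2) L) * hd
      · linear_combination (X 1 : MvPolynomial (Fin 2) L) * hd)
    (by
      ext i : 1
      fin_cases i <;>
        simp only [Fin.zero_eta, Fin.mk_one, AlgHom.comp_apply, AlgHom.id_apply, aeval_X, aeval_C,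
          map_add, map_mul, algebraMap_eq, Matrix.cons_val_zero,
          Matrix.cons_val_one, Matrix.cons_val_fin_one]
      · linear_combination (X 0 : MvPolynomial (Fin 2) L) * hd
      · linear_combination (X 1 : MvPolynomial (Fin 2) L) * hd)

def linForm (α : L) (q : Fin 2 → L) : L := q 0 + α * q 1

theorem eval_linearChange_X_zero (α β : L) (h : α ≠ β) (q : Fin 2 → L) :
    eval q (linearChange α β h (X 0)) = linForm α q := by
  simp [linearChange, linForm]

theorem eval_linearChange_X_one (α β : L) (h : α ≠ β) (q : Fin 2 → L) :
    eval q (linearChange α β h (X 1)) = linForm β q := by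
  simp [linearChange, linForm]

theorem eq_of_linForm_eq {α β : L} (h : α ≠ β) {q q' : Fin 2 → L}
    (hα : linForm α q = linForm α q') (hβ : linForm β q = linForm β q') : q = q' := by
  have h1 : q 1 = q' 1 := mul_left_cancel₀ (sub_ne_zero.mpr h)
    (by unfold linForm at hα hβ; linear_combination hα - hβ)
  have h0 : q 0 = q' 0 := by unfold linForm at hα; linear_combination hα - α * h1
  ext i
  fin_cases i
  exacts [h0, h1]

theorem apply_eq_self_of_linForm_apply_eq_mul {α β : L} (hne : α ≠ β) {p : Fin 2 → L}
    (hpC : linForm α p * linForm β p = 1) {f : (Fin 2 → L) → Fin 2 → L} {s t : L}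
    (h : ∀ q, linForm α (f q) = s * linForm α q ∧ linForm β (f q) = t * linForm β q)
    (hfix : f p = p) (q : Fin 2 → L) : f q = q := by
  have hs : s = 1 := by
    have := (h p).1
    rw [hfix] at this
    linear_combination (1 - s) * hpC - linForm β p * this
  have ht : t = 1 := by
    have := (h p).2
    rw [hfix] at this
    linear_combination (1 - t) * hpC - linForm α p * this
  exact eq_of_linForm_eq hne (by rw [(h q).1, hs, one_mul]) (by rw [(h q).2, ht, one_mul])

end TwoVariables

section PointAction

variable {k : Type*} [Field k]

theorem aeval_actp (χ : PlaneAut k) (q : Pt k) (P : MvPolynomial (Fin 2) k) :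
    aeval (actp χ q) P = aeval q (χ.symm P) := by
  induction P using MvPolynomial.induction_on with
  | C r => simp only [← algebraMap_eq, AlgEquiv.commutes, AlgHom.commutes]
  | add P Q hP hQ => simp [hP, hQ]
  | mul_X P i hP => simp [hP, actp]

theorem actp_mul (φ χ : PlaneAut k) (q : Pt k) : actp (φ * χ) q = actp φ (actp χ q) := by
  funext i
  rw [actp, actp, aeval_actp]
  rfl

theorem actp_one (q : Pt k) : actp (1 : PlaneAut k) q = q := by
  funext i
  exact aeval_X q i

theorem mapsTo_actp_inv {Δ : Set (Pt k)} {ψ : PlaneAut k} (hψ : ψ ∈ stabSet Δ) :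
    Set.MapsTo (actp ψ⁻¹) Δ Δ := by
  rintro _ hq
  obtain ⟨r, hr, rfl⟩ := (Set.ext_iff.mp hψ _).mpr hq
  rwa [← actp_mul, inv_mul_cancel, actp_one]

theorem eval_extendScalarsEquiv_symm (ψ : PlaneAut k) (q : Pt k)
    (P : MvPolynomial (Fin 2) (AlgebraicClosure k)) :
    eval q (extendScalarsEquiv _ ψ.symm P) = eval (actp ψ q) P :=
  eval_extendScalars _ q P

theorem eval_symm_extendScalarsEquiv_symm (ψ : PlaneAut k) (q : Pt k)
    (P : MvPolynomial (Fin 2) (AlgebraicClosure k)) :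
    eval q ((extendScalarsEquiv _ ψ.symm).symm P) = eval (actp ψ⁻¹ q) P :=
  eval_extendScalars _ q P

theorem exists_algebraMap_eq_actp (ψ : PlaneAut k) (x : Fin 2 → k) (i : Fin 2) :
    ∃ a : k, emb k a = actp ψ (emb k ∘ x) i :=
  ⟨_, (aeval_algebraMap_apply _ x _).symm⟩

theorem eq_one_of_actp_eq_self {ψ : PlaneAut k} (h : ∀ q, actp ψ q = q) : ψ = 1 := by
  have hX : ∀ i, ψ.symm (X i) = X i := fun i =>
    map_injective _ (emb k).injective <| MvPolynomial.funext fun q => by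
      simpa [actp, eval_map, ← aeval_def] using congrFun (h q) i
  have : ψ.symm = 1 := AlgEquiv.coe_toAlgHom_injective (algHom_ext hX)
  rw [← AlgEquiv.symm_symm ψ, this]
  rfl

theorem exists_linForm_actp_eq_mul {α β : AlgebraicClosure k}
    (hαβ : α ≠ β) {ψ : PlaneAut k}
    (hψ : ψ ∈ stabSet {q : Pt k | linForm α q * linForm β q = 1}) :
    ∃ s t : AlgebraicClosure k,
      (∀ q, linForm α (actp ψ q) = s * linForm α q ∧
        linForm β (actp ψ q) = t * linForm β q) ∨
      (∀ q, linForm α (actp ψ q) = s * linForm β q ∧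
        linForm β (actp ψ q) = t * linForm α q) := by
  set τ := linearChange α β hαβ
  set σ := extendScalarsEquiv (AlgebraicClosure k) ψ.symm
  set F : MvPolynomial (Fin 2) (AlgebraicClosure k) := τ (X 0 * X 1 - 1)
  have hF : Prime F := by
    have h := (irreducible_C_mul_X_mul_X_add_C (L := AlgebraicClosure k) one_ne_zero
      (neg_ne_zero.mpr one_ne_zero)).map τ
    simpa [F, ← sub_eq_add_neg] using h.prime
  have hevalF : ∀ q, eval q F = 0 ↔ q ∈ {q : Pt k | linForm α q * linForm β q = 1} := by
    intro q
    simp [F, τ, eval_linearChange_X_zero, eval_linearChange_X_one, sub_eq_zero]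
  have hassoc : Associated (σ F) F := by
    refine associated_of_forall_eval_eq_zero σ hF (fun q hq => ?_) (fun q hq => ?_)
    · rw [eval_extendScalarsEquiv_symm, hevalF]
      exact hψ ▸ Set.mem_image_of_mem _ ((hevalF q).mp hq)
    · rw [eval_symm_extendScalarsEquiv_symm, hevalF]
      exact mapsTo_actp_inv hψ ((hevalF q).mp hq)
  -- in the coordinates `τ` the conic becomes the hyperbola `X₀ X₁ = 1`
  obtain ⟨s, t, hst⟩ := exists_eq_C_mul_of_associated_X_mul_X_sub_one
    (τ.trans (σ.trans τ.symm)) (by simpa [F] using hassoc.map τ.symm)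
  have hconj : ∀ i j c, (τ.trans (σ.trans τ.symm)) (X i) = C c * X j →
      ∀ q, eval (actp ψ q) (τ (X i)) = c * eval q (τ (X j)) := by
    intro i j c h q
    have hσ : σ (τ (X i)) = C c * τ (X j) := by
      rw [← τ.apply_symm_apply (σ (τ (X i)))]
      rw [AlgEquiv.trans_apply, AlgEquiv.trans_apply] at h
      rw [h, map_mul, ← algebraMap_eq, AlgEquiv.commutes]
    rw [← eval_extendScalarsEquiv_symm, hσ, map_mul, eval_C]
  refine ⟨s, t, hst.imp (fun h q => ?_) (fun h q => ?_)⟩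
  · simpa [τ, eval_linearChange_X_zero, eval_linearChange_X_one] using
      And.intro (hconj 0 0 s h.1 q) (hconj 1 1 t h.2 q)
  · simpa [τ, eval_linearChange_X_zero, eval_linearChange_X_one] using
      And.intro (hconj 0 1 s h.1 q) (hconj 1 0 t h.2 q)

end PointAction

def conicReflection {K : Type*} [Field K] (μ : K) (p q : Fin 2 → K) : Fin 2 → K :=
  ![(μ * p 0 * p 1 + 1) * q 0 + (μ * (μ * p 0 * p 1 + 1) + μ * p 1 ^ 2) * q 1,
    μ * p 1 ^ 2 * q 0 + (μ * p 0 * p 1 + 1) * q 1]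

section CharTwo

variable {K : Type*} [Field K] [CharP K 2] {μ α β : K}

theorem linForm_mul_linForm (hα : α ^ 2 + μ * α + 1 = 0) (hαβ : α + β = μ)
    (q : Fin 2 → K) :
    linForm α q * linForm β q = q 0 ^ 2 + μ * q 0 * q 1 + q 1 ^ 2 := by
  subst hαβ
  unfold linForm
  linear_combination q 1 ^ 2 * hα - (q 1 ^ 2 + α ^ 2 * q 1 ^ 2) * CharTwo.two_eq_zero (R := K)

theorem linForm_conicReflection (hα : α ^ 2 + μ * α + 1 = 0) (hαβ : α + β = μ)
    {p : Fin 2 → K} (hp : p 0 ^ 2 + μ * p 0 * p 1 + p 1 ^ 2 = 1) (q : Fin 2 → K) :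
    linForm α (conicReflection μ p q) = linForm α p ^ 2 * linForm β q := by
  subst hαβ
  simp only [linForm, conicReflection, Matrix.cons_val_zero, Matrix.cons_val_one]
  set x := p 0
  set y := p 1
  linear_combination
    q 0 * ((-y ^ 2) * hα - hp + ((α + β) * x * y + α * (α + β) * y ^ 2 - α * x * y + y ^ 2) *
      CharTwo.two_eq_zero (R := K)) +
    q 1 * ((-β) * hp + (2 * x * y - α * y ^ 2) * hα + (α + α * y ^ 2 + α ^ 3 * y ^ 2 +
      β * y ^ 2 + β ^ 2 * x * y - x * y - α ^ 2 * x * y) * CharTwo.two_eq_zero (R := K))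

theorem sq_add_mul_add_one_eq_zero_of_add_eq (hα : α ^ 2 + μ * α + 1 = 0)
    (hαβ : α + β = μ) :
    β ^ 2 + μ * β + 1 = 0 := by
  subst hαβ
  linear_combination hα + (β ^ 2 - α ^ 2) * CharTwo.two_eq_zero (R := K)

theorem linForm_conicReflection_right (hα : α ^ 2 + μ * α + 1 = 0) (hαβ : α + β = μ)
    {p : Fin 2 → K} (hp : p 0 ^ 2 + μ * p 0 * p 1 + p 1 ^ 2 = 1) (q : Fin 2 → K) :
    linForm β (conicReflection μ p q) = linForm β p ^ 2 * linForm α q :=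
  linForm_conicReflection (sq_add_mul_add_one_eq_zero_of_add_eq hα hαβ)
    ((add_comm β α).trans hαβ) hp q

theorem exists_roots_of_ne_zero [IsAlgClosed K] (hμ : μ ≠ 0) :
    ∃ α β : K, α ^ 2 + μ * α + 1 = 0 ∧ α + β = μ ∧ α ≠ β := by
  have hdeg : (Polynomial.X ^ 2 + Polynomial.C μ * Polynomial.X + 1 : Polynomial K).degree = 2 :=
    by compute_degree!
  obtain ⟨α, hα⟩ := IsAlgClosed.exists_root _ (hdeg ▸ two_ne_zero)
  refine ⟨α, μ - α, by simpa using hα, add_sub_cancel α μ, fun h => hμ ?_⟩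
  rw [← add_sub_cancel α μ, ← h, ← two_mul, CharTwo.two_eq_zero, zero_mul]

theorem conicReflection_apply_self (hα : α ^ 2 + μ * α + 1 = 0) (hαβ : α + β = μ)
    (hne : α ≠ β) {p : Fin 2 → K} (hp : p 0 ^ 2 + μ * p 0 * p 1 + p 1 ^ 2 = 1) :
    conicReflection μ p p = p := by
  have hpC : linForm α p * linForm β p = 1 := by rw [linForm_mul_linForm hα hαβ, hp]
  refine eq_of_linForm_eq hne ?_ ?_
  · rw [linForm_conicReflection hα hαβ hp]
    linear_combination linForm α p * hpC
  · rw [linForm_conicReflection_right hα hαβ hp]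
    linear_combination linForm β p * hpC

theorem eq_conicReflection_of_linForm_apply_eq_mul_swap (hα : α ^ 2 + μ * α + 1 = 0)
    (hαβ : α + β = μ) (hne : α ≠ β) {p : Fin 2 → K}
    (hp : p 0 ^ 2 + μ * p 0 * p 1 + p 1 ^ 2 = 1)
    {f : (Fin 2 → K) → Fin 2 → K} {s t : K}
    (h : ∀ q, linForm α (f q) = s * linForm β q ∧ linForm β (f q) = t * linForm α q)
    (hfix : f p = p) : f = conicReflection μ p := by
  have hpC : linForm α p * linForm β p = 1 := by rw [linForm_mul_linForm hα hαβ, hp]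
  have hs : s = linForm α p ^ 2 := by
    have := (h p).1
    rw [hfix] at this
    linear_combination (-s) * hpC - linForm α p * this
  have ht : t = linForm β p ^ 2 := by
    have := (h p).2
    rw [hfix] at this
    linear_combination (-t) * hpC - linForm β p * this
  funext q
  refine eq_of_linForm_eq hne ?_ ?_
  · rw [(h q).1, linForm_conicReflection hα hαβ hp, hs]
  · rw [(h q).2, linForm_conicReflection_right hα hαβ hp, ht]

end CharTwo

theorem stmt_7_general (k : Type*) [Field k] (hchar : ringChar k = 2)
    (mu : k) (hmu : mu ≠ 0)
    (p : Pt k) (hp : p 0 ^ 2 + emb k mu * p 0 * p 1 + p 1 ^ 2 = 1)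
    (ψ : PlaneAut k)
    (hψ : ψ ∈ stabSet {q : Pt k | q 0 ^ 2 + emb k mu * q 0 * q 1 + q 1 ^ 2 = 1}) :
    actp ψ p = p ↔ ψ = 1 ∨
      ((∃ a : k, emb k a = emb k mu * p 0 * p 1 + 1) ∧
       (∃ b : k, emb k b = emb k mu * p 1 ^ 2) ∧
       actp ψ = fun q =>
         ![(emb k mu * p 0 * p 1 + 1) * q 0 +
             (emb k mu * (emb k mu * p 0 * p 1 + 1) + emb k mu * p 1 ^ 2) * q 1,
           emb k mu * p 1 ^ 2 * q 0 + (emb k mu * p 0 * p 1 + 1) * q 1]) := by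
  have : CharP k 2 := ringChar.of_eq hchar
  have : CharP (AlgebraicClosure k) 2 :=
    charP_of_injective_algebraMap (algebraMap k _).injective 2
  change _ ↔ _ ∨ (_ ∧ _ ∧ actp ψ = conicReflection (emb k mu) p)
  obtain ⟨α, β, hα, hαβ, hne⟩ :=
    exists_roots_of_ne_zero ((map_ne_zero (emb k)).mpr hmu)
  simp only [← linForm_mul_linForm hα hαβ] at hψ
  obtain ⟨s, t, hst⟩ := exists_linForm_actp_eq_mul hne hψ
  refine ⟨fun hfix => hst.imp (fun h => ?_) (fun h => ?_), ?_⟩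
  · have hpC : linForm α p * linForm β p = 1 := by rw [linForm_mul_linForm hα hαβ, hp]
    exact eq_one_of_actp_eq_self (apply_eq_self_of_linForm_apply_eq_mul hne hpC h hfix)
  · have hψR := eq_conicReflection_of_linForm_apply_eq_mul_swap hα hαβ hne hp h hfix
    refine ⟨?_, ?_, hψR⟩
    · simpa [hψR, conicReflection] using exists_algebraMap_eq_actp ψ ![1, 0] 0
    · simpa [hψR, conicReflection] using exists_algebraMap_eq_actp ψ ![1, 0] 1
  · rintro (rfl | ⟨-, -, hψR⟩)
    · exact actp_one p
    · rw [hψR]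
      exact conicReflection_apply_self hα hαβ hne hp

/-- Isotropy in the stabilizer of the conic `x² + μxy + y² = 1`
(`char k = 2`, `x² + μx + 1` without roots in `k`): `ψ ∈ Aut(𝔸², C)` fixes `p ∈ C` iff
`ψ = id`, or `a := μx_p y_p + 1` and `b := μy_p²` lie in `k` and `ψ` is the linear map
`q ↦ (a·q₁ + (μa + b)·q₂, b·q₁ + a·q₂)`. -/
theorem stmt_7 (k : Type*) [Field k] [PerfectField k] (hchar : ringChar k = 2)
    (mu : k) (hmu : mu ≠ 0)
    (hroot : ¬ ∃ r : k, r ^ 2 + mu * r + 1 = 0)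
    (p : Pt k) (hp : p 0 ^ 2 + emb k mu * p 0 * p 1 + p 1 ^ 2 = 1)
    (ψ : PlaneAut k)
    (hψ : ψ ∈ stabSet {q : Pt k | q 0 ^ 2 + emb k mu * q 0 * q 1 + q 1 ^ 2 = 1}) :
    actp ψ p = p ↔ ψ = 1 ∨
      ((∃ a : k, emb k a = emb k mu * p 0 * p 1 + 1) ∧
       (∃ b : k, emb k b = emb k mu * p 1 ^ 2) ∧
       actp ψ = fun q =>
         ![(emb k mu * p 0 * p 1 + 1) * q 0 +
             (emb k mu * (emb k mu * p 0 * p 1 + 1) + emb k mu * p 1 ^ 2) * q 1,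
           emb k mu * p 1 ^ 2 * q 0 + (emb k mu * p 0 * p 1 + 1) * q 1]) :=
  stmt_7_general k hchar mu hmu p hp ψ hψ
end
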